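/- arXiv:2603.17411 — 4 statements merged into one kernel-verified Lean document; each statement's English description precedes it below -/
import Mathlib

section
/- There is no Borel set A ⊆ ℝ² such that (a) ℋ¹(V_s \ A) = 0 for every s ∈ ℝ, where V_s = {s} × ℝ, and (b) ℋ¹(H_t ∩ A) = 0 for every t ∈ ℝ, where H_t = ℝ × {t}. Here ℋ¹ denotes 1-dimensional Hausdorff measure on ℝ². -/
/-!
Identify `ℝ²` with `ℝ × ℝ` and let `B` be the Borel set corresponding to `A`. Since `ℋ¹` on a
horizontal or vertical line is the Lebesgue measure of `ℝ`, almost every point of each vertical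
section of `B` lies in `B`, while each horizontal section of `B` is null. Computing the planar
measure of `B` by Fubini in both orders then gives `∞ · ∞ = 0`.
-/

open MeasureTheory Set

theorem MeasureTheory.Measure.eq_zero_or_eq_zero_of_forall_ae_mem_of_forall_ae_notMem
    {α β : Type*} [MeasurableSpace α] [MeasurableSpace β] {μ : Measure α} {ν : Measure β}
    [SFinite μ] [SFinite ν] {B : Set (α × β)} (hB : MeasurableSet B)
    (h_vert : ∀ x, ∀ᵐ y ∂ν, (x, y) ∈ B) (h_horiz : ∀ y, ∀ᵐ x ∂μ, (x, y) ∉ B) :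
    μ = 0 ∨ ν = 0 := by
  have h_full : μ.prod ν B = ν univ * μ univ := by
    rw [Measure.prod_apply hB, ← lintegral_const]
    exact lintegral_congr fun x => measure_congr (ae_eq_univ.mpr (h_vert x))
  have h_null : μ.prod ν B = 0 := by
    rw [Measure.prod_apply_symm hB, ← lintegral_zero]
    exact lintegral_congr fun y => measure_eq_zero_iff_ae_notMem.mpr (h_horiz y)
  rw [h_null, eq_comm, mul_eq_zero, Measure.measure_univ_eq_zero,
    Measure.measure_univ_eq_zero] at h_full
  exact h_full.symm

theorem Isometry.volume_preimage_eq_zero {X : Type*} [EMetricSpace X]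
    [MeasurableSpace X] [BorelSpace X] {f : ℝ → X} (hf : Isometry f) {S : Set X}
    (hS : μH[1] S = 0) : volume (f ⁻¹' S) = 0 := by
  rw [← hausdorffMeasure_real, hf.hausdorffMeasure_preimage (Or.inl zero_le_one)]
  exact measure_mono_null inter_subset_left hS

theorem isometry_euclideanSpace_two_horizontal (t : ℝ) : Isometry fun s : ℝ => !₂[s, t] :=
  Isometry.of_dist_eq fun a b => by
    simp [EuclideanSpace.dist_eq, Real.dist_eq, Real.sqrt_sq_eq_abs]

theorem isometry_euclideanSpace_two_vertical (s : ℝ) : Isometry fun t : ℝ => !₂[s, t] :=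
  Isometry.of_dist_eq fun a b => by
    simp [EuclideanSpace.dist_eq, Real.dist_eq, Real.sqrt_sq_eq_abs]

/-- There is no Borel set `A ⊆ ℝ²` such that `ℋ¹(V_s \ A) = 0` for every vertical line
`V_s = {s} × ℝ` and `ℋ¹(H_t ∩ A) = 0` for every horizontal line `H_t = ℝ × {t}`. -/
theorem no_essential_supremum_of_vertical_lines :
    ¬ ∃ A : Set (EuclideanSpace ℝ (Fin 2)), MeasurableSet A ∧
      (∀ s : ℝ, μH[1] ({p : EuclideanSpace ℝ (Fin 2) | p 0 = s} \ A) = 0) ∧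
      (∀ t : ℝ, μH[1] ({p : EuclideanSpace ℝ (Fin 2) | p 1 = t} ∩ A) = 0) := by
  rintro ⟨A, hA, hV, hH⟩
  have hB : MeasurableSet {p : ℝ × ℝ | !₂[p.1, p.2] ∈ A} :=
    (by fun_prop : Continuous fun p : ℝ × ℝ => !₂[p.1, p.2]).measurable hA
  have h_vert (s : ℝ) : ∀ᵐ t, !₂[s, t] ∈ A := by
    refine measure_mono_null (fun t ht => ?_)
      ((isometry_euclideanSpace_two_vertical s).volume_preimage_eq_zero (hV s))
    simpa using ht
  have h_horiz (t : ℝ) : ∀ᵐ s, !₂[s, t] ∉ A := by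
    refine measure_mono_null (fun s hs => ?_)
      ((isometry_euclideanSpace_two_horizontal t).volume_preimage_eq_zero (hH t))
    simpa using hs
  exact NeZero.ne (volume : Measure ℝ) <| by
    simpa using Measure.eq_zero_or_eq_zero_of_forall_ae_mem_of_forall_ae_notMem hB h_vert h_horiz
end

section
/- Let (X, 𝒜, 𝒩) be a measurable space with a σ-ideal 𝒩 ⊆ 𝒜, and let ℰ ⊆ 𝒜. If every subcollection of 𝒜 admits an 𝒩-essential supremum, then every compatible family (g_E)_{E ∈ ℰ} of measurable functions g_E : X → ℝ admits a gluing, i.e., a measurable g : X → ℝ with E ∩ {g ≠ g_E} ∈ 𝒩 for all E ∈ ℰ. -/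
open MeasureTheory

/-- `N` is a σ-ideal of the σ-algebra: all members are measurable, it contains `∅`,
is closed under measurable subsets and under countable unions. -/
def IsSigmaIdeal {X : Type*} [MeasurableSpace X] (N : Set (Set X)) : Prop :=
  (∀ s ∈ N, MeasurableSet s) ∧ ∅ ∈ N ∧
    (∀ s t : Set X, s ∈ N → t ⊆ s → MeasurableSet t → t ∈ N) ∧
    ∀ f : ℕ → Set X, (∀ n, f n ∈ N) → (⋃ n, f n) ∈ N

/-- `A` is an `N`-essential supremum of the collection `F` of measurable sets. -/
def IsEssSup {X : Type*} [MeasurableSpace X] (N : Set (Set X)) (F : Set (Set X))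
    (A : Set X) : Prop :=
  MeasurableSet A ∧ (∀ E ∈ F, E \ A ∈ N) ∧
    ∀ B : Set X, MeasurableSet B → (∀ E ∈ F, E \ B ∈ N) → A \ B ∈ N

/-!
For each rational `q` let `A q` be an essential supremum of the sets `E ∩ {g E < q}`, `E ∈ ℰ`.
Compatibility makes `A q` agree with `{g E < q}` on each `E ∈ ℰ` up to a null set, so off a
countable union of null sets the family `A` is the family of strict sublevel sets of `g E` on `E`.
The gluing is the function whose rational sublevel sets are the `A q`.
-/

open scoped symmDiff

section EssSup

variable {X : Type*} [MeasurableSpace X] {N : Set (Set X)}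

namespace IsSigmaIdeal

theorem mem_of_subset (hN : IsSigmaIdeal N) {s t : Set X} (hs : s ∈ N) (hts : t ⊆ s)
    (ht : MeasurableSet t) : t ∈ N :=
  hN.2.2.1 s t hs hts ht

theorem iUnion_mem (hN : IsSigmaIdeal N) {ι : Sort*} [Countable ι] {f : ι → Set X}
    (hf : ∀ i, f i ∈ N) : (⋃ i, f i) ∈ N := by
  cases isEmpty_or_nonempty ι with
  | inl _ => simpa only [Set.iUnion_of_empty] using hN.2.1
  | inr _ =>
    obtain ⟨e, he⟩ := exists_surjective_nat ι
    rw [← he.iUnion_comp]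
    exact hN.2.2.2 _ fun n => hf (e n)

theorem union_mem (hN : IsSigmaIdeal N) {s t : Set X} (hs : s ∈ N) (ht : t ∈ N) : s ∪ t ∈ N := by
  rw [Set.union_eq_iUnion]
  exact hN.iUnion_mem (Bool.forall_bool.2 ⟨ht, hs⟩)

end IsSigmaIdeal

theorem IsEssSup.inter_symmDiff_sublevel_mem (hN : IsSigmaIdeal N) {ℰ : Set (Set X)}
    (hE : ∀ E ∈ ℰ, MeasurableSet E) {g : Set X → X → ℝ} (hg : ∀ E ∈ ℰ, Measurable (g E))
    (hcompat : ∀ E ∈ ℰ, ∀ E' ∈ ℰ, E ∩ E' ∩ {x | g E x ≠ g E' x} ∈ N) {q : ℝ} {A : Set X}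
    (hA : IsEssSup N ((fun E => E ∩ {x | g E x < q}) '' ℰ) A) {E : Set X} (hEℰ : E ∈ ℰ) :
    E ∩ A ∆ {x | g E x < q} ∈ N := by
  have hsub : ∀ E ∈ ℰ, MeasurableSet {x | g E x < q} := fun E hEℰ =>
    measurableSet_lt (hg E hEℰ) measurable_const
  have hB : MeasurableSet (Eᶜ ∪ {x | g E x < q}) := (hE E hEℰ).compl.union (hsub E hEℰ)
  have below : (E ∩ {x | g E x < q}) \ A ∈ N := hA.2.1 _ ⟨E, hEℰ, rfl⟩
  -- By compatibility, `Eᶜ ∪ {g E < q}` is an essential upper bound of the family.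
  have above : A \ (Eᶜ ∪ {x | g E x < q}) ∈ N := by
    refine hA.2.2 _ hB ?_
    rintro _ ⟨E', hE'ℰ, rfl⟩
    refine hN.mem_of_subset (hcompat E' hE'ℰ E hEℰ) ?_
      (((hE E' hE'ℰ).inter (hsub E' hE'ℰ)).diff hB)
    rintro x ⟨⟨hxE', hlt⟩, hxB⟩
    simp only [Set.mem_union, Set.mem_compl_iff, Set.mem_ofPred_eq, not_or, not_not,
      not_lt] at hxB hlt
    exact ⟨⟨hxE', hxB.1⟩, (hlt.trans_le hxB.2).ne⟩
  have hsplit : E ∩ A ∆ {x | g E x < q} =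
      (E ∩ {x | g E x < q}) \ A ∪ A \ (Eᶜ ∪ {x | g E x < q}) := by
    ext x
    simp only [Set.mem_inter_iff, Set.mem_symmDiff, Set.mem_sdiff, Set.mem_union,
      Set.mem_compl_iff]
    tauto
  rw [hsplit]
  exact hN.union_mem below above

end EssSup

theorem EReal.iInf_rat_ite_lt (a : ℝ) :
    ⨅ q : ℚ, (if a < q then ((q : ℝ) : EReal) else ⊤) = a := by
  refine le_antisymm (le_of_forall_gt_imp_ge_of_dense fun c hc => ?_) (le_iInf fun q => ?_)
  · obtain ⟨q, haq, hqc⟩ := EReal.exists_rat_btwn_of_lt hc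
    have haq : a < q := by exact_mod_cast haq
    exact (iInf_le _ q).trans (by rw [if_pos haq]; exact hqc.le)
  · split_ifs with haq
    · exact_mod_cast haq.le
    · exact le_top

section RatSublevels

variable {X : Type*}

open Classical in
/-- Points lying in no `A q` (infimum `⊤`) or in every `A q` (infimum `⊥`) get the junk
value `0`. -/
noncomputable def ofRatSublevels (A : ℚ → Set X) (x : X) : ℝ :=
  (⨅ q : ℚ, if x ∈ A q then ((q : ℝ) : EReal) else ⊤).toReal

theorem measurable_ofRatSublevels [MeasurableSpace X] {A : ℚ → Set X}
    (hA : ∀ q, MeasurableSet (A q)) :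
    Measurable (ofRatSublevels A) :=
  (Measurable.iInf fun q => Measurable.ite (hA q) measurable_const measurable_const).ereal_toReal

theorem ofRatSublevels_eq {A : ℚ → Set X} {x : X} {a : ℝ} (h : ∀ q : ℚ, x ∈ A q ↔ a < q) :
    ofRatSublevels A x = a := by
  simp only [ofRatSublevels, h, EReal.iInf_rat_ite_lt, EReal.toReal_coe]

end RatSublevels

/-- If every subcollection of `𝒜` admits an `N`-essential supremum, then every compatible
family `(g_E)_{E ∈ ℰ}` of measurable functions admits a gluing. -/
theorem gluing_of_localizable {X : Type*} [MeasurableSpace X]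
    (N : Set (Set X)) (hN : IsSigmaIdeal N)
    (hloc : ∀ F : Set (Set X), (∀ E ∈ F, MeasurableSet E) → ∃ A, IsEssSup N F A)
    (ℰ : Set (Set X)) (hE : ∀ E ∈ ℰ, MeasurableSet E)
    (g : Set X → X → ℝ) (hg : ∀ E ∈ ℰ, Measurable (g E))
    (hcompat : ∀ E ∈ ℰ, ∀ E' ∈ ℰ, E ∩ E' ∩ {x | g E x ≠ g E' x} ∈ N) :
    ∃ G : X → ℝ, Measurable G ∧ ∀ E ∈ ℰ, E ∩ {x | G x ≠ g E x} ∈ N := by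
  choose A hA using fun q : ℚ => hloc ((fun E => E ∩ {x | g E x < q}) '' ℰ) <| by
    rintro _ ⟨E, hEℰ, rfl⟩
    exact (hE E hEℰ).inter (measurableSet_lt (hg E hEℰ) measurable_const)
  have hG : Measurable (ofRatSublevels A) := measurable_ofRatSublevels fun q => (hA q).1
  refine ⟨ofRatSublevels A, hG, fun E hEℰ => ?_⟩
  have hbad : (⋃ q : ℚ, E ∩ A q ∆ {x | g E x < q}) ∈ N :=
    hN.iUnion_mem fun q => (hA q).inter_symmDiff_sublevel_mem hN hE hg hcompat hEℰ
  refine hN.mem_of_subset hbad ?_ ((hE E hEℰ).inter (measurableSet_eq_fun hG (hg E hEℰ)).compl)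
  rintro x ⟨hxE, hne⟩
  by_contra hgood
  refine hne (ofRatSublevels_eq fun q => ?_)
  simp only [Set.mem_iUnion, Set.mem_inter_iff, Set.mem_symmDiff, Set.mem_ofPred_eq,
    not_exists] at hgood
  have := hgood q
  tauto
end

section
/- Let (X, 𝒜, 𝒩) be a measurable space with a σ-ideal 𝒩 ⊆ 𝒜. If every compatible family of measurable real-valued functions indexed by an arbitrary subcollection ℰ ⊆ 𝒜 admits a gluing, then every collection ℰ ⊆ 𝒜 admits an 𝒩-essential supremum. -/
open MeasureTheory

/-- If every compatible family of measurable real-valued functions indexed by an arbitrary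
subcollection of `𝒜` admits a gluing, then every collection `ℰ ⊆ 𝒜` admits an
`N`-essential supremum. -/
theorem localizable_of_gluing {X : Type*} [MeasurableSpace X]
    (N : Set (Set X)) (hN : IsSigmaIdeal N)
    (hglue : ∀ F : Set (Set X), (∀ E ∈ F, MeasurableSet E) →
      ∀ g : Set X → X → ℝ, (∀ E ∈ F, Measurable (g E)) →
        (∀ E ∈ F, ∀ E' ∈ F, E ∩ E' ∩ {x | g E x ≠ g E' x} ∈ N) →
        ∃ G : X → ℝ, Measurable G ∧ ∀ E ∈ F, E ∩ {x | G x ≠ g E x} ∈ N)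
    (ℰ : Set (Set X)) (hE : ∀ E ∈ ℰ, MeasurableSet E) :
    ∃ A, IsEssSup N ℰ A := by
  classical
  obtain ⟨hmeas, hempty, hsub, _⟩ := hN
  set U : Set (Set X) := {B | MeasurableSet B ∧ ∀ E ∈ ℰ, E \ B ∈ N} with hU
  set F : Set (Set X) := ℰ ∪ (compl '' U) with hF
  set g : Set X → X → ℝ := fun S _ => if S ∈ ℰ then 1 else 0 with hg
  have hFmeas : ∀ E ∈ F, MeasurableSet E := by
    rintro E (h | ⟨B, hB, rfl⟩)
    · exact hE E h
    · exact hB.1.compl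
  have hgmeas : ∀ E ∈ F, Measurable (g E) := fun E _ => measurable_const
  have hcompat : ∀ E ∈ F, ∀ E' ∈ F, E ∩ E' ∩ {x | g E x ≠ g E' x} ∈ N := by
    intro E hEF E' hE'F
    by_cases h1 : E ∈ ℰ <;> by_cases h2 : E' ∈ ℰ
    · have : E ∩ E' ∩ {x | g E x ≠ g E' x} = ∅ := by
        simp [hg, h1, h2]
      rw [this]; exact hempty
    · rcases hE'F with h2' | ⟨B, hB, rfl⟩
      · exact absurd h2' h2
      · have : E ∩ Bᶜ ∩ {x | g E x ≠ g Bᶜ x} = E \ B := by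
          ext x; simp [hg, h1, h2, Set.diff_eq]
        rw [this]; exact hB.2 E h1
    · rcases hEF with h1' | ⟨B, hB, rfl⟩
      · exact absurd h1' h1
      · have : Bᶜ ∩ E' ∩ {x | g Bᶜ x ≠ g E' x} = E' \ B := by
          ext x; simp [hg, h1, h2, Set.diff_eq]; tauto
        rw [this]; exact hB.2 E' h2
    · have : E ∩ E' ∩ {x | g E x ≠ g E' x} = ∅ := by
        simp [hg, h1, h2]
      rw [this]; exact hempty
  obtain ⟨G, hGmeas, hGl⟩ := hglue F hFmeas g hgmeas hcompat
  refine ⟨G ⁻¹' {1}, hGmeas (measurableSet_singleton 1), ?_, ?_⟩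
  · intro E hEℰ
    have h := hGl E (Or.inl hEℰ)
    have : E \ G ⁻¹' {1} = E ∩ {x | G x ≠ g E x} := by
      ext x; simp [hg, hEℰ, Set.diff_eq]
    rw [this]; exact h
  · intro B hBmeas hBub
    have hBU : B ∈ U := ⟨hBmeas, hBub⟩
    have hmA : MeasurableSet (G ⁻¹' {1} \ B) :=
      (hGmeas (measurableSet_singleton 1)).diff hBmeas
    by_cases hc : Bᶜ ∈ ℰ
    · have hcN : Bᶜ ∈ N := by
        have := hBub Bᶜ hc
        rwa [Set.diff_eq, Set.inter_self] at this
      exact hsub Bᶜ _ hcN (fun x hx => hx.2) hmA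
    · have h := hGl Bᶜ (Or.inr ⟨B, hBU, rfl⟩)
      refine hsub _ _ h ?_ hmA
      intro x hx
      refine ⟨hx.2, ?_⟩
      simp only [hg, hc, if_neg, Set.mem_setOf_eq]
      have : G x = 1 := hx.1
      simp [this]
end

section
/- If (X, 𝒜, μ) is a σ-finite measure space and ℰ ⊆ 𝒜 is any collection of measurable sets, then ℰ admits a μ-essential supremum: there exists A ∈ 𝒜 with μ(E \ A) = 0 for all E ∈ ℰ, and μ(A \ B) = 0 for every B ∈ 𝒜 satisfying μ(E \ B) = 0 for all E ∈ ℰ. -/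
open MeasureTheory

theorem measure_sUnion_sdiff_null {α F : Type*} [FunLike F (Set α) ENNReal]
    [OuterMeasureClass F α] {μ : F} {S : Set (Set α)} (hS : S.Countable) {B : Set α}
    (h : ∀ E ∈ S, μ (E \ B) = 0) : μ (⋃₀ S \ B) = 0 := by
  simpa only [Set.sUnion_eq_biUnion, Set.iUnion_sdiff] using (measure_biUnion_null_iff hS).mpr h

/-- Every collection `ℰ` of measurable sets in a σ-finite measure space admits a
`μ`-essential supremum. -/
theorem essSup_exists_of_sigmaFinite {X : Type*} [MeasurableSpace X]
    (μ : Measure X) [SigmaFinite μ] (ℰ : Set (Set X)) (hE : ∀ E ∈ ℰ, MeasurableSet E) :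
    ∃ A : Set X, MeasurableSet A ∧ (∀ E ∈ ℰ, μ (E \ A) = 0) ∧
      ∀ B : Set X, MeasurableSet B → (∀ E ∈ ℰ, μ (E \ B) = 0) → μ (A \ B) = 0 := by
  -- `ℰ` is a.e. covered by a countable subfamily `D`, whose union is the essential supremum.
  obtain ⟨D, hDℰ, hD, hℰD⟩ := Measure.exists_ae_subset_biUnion_countable μ hE
  refine ⟨⋃₀ D, .sUnion hD fun E hED => hE E (hDℰ hED), ?_, ?_⟩
  · exact fun E hEℰ => ae_le_set.mp (hℰD E hEℰ)
  · exact fun B _ hB => measure_sUnion_sdiff_null hD fun E hED => hB E (hDℰ hED)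
end
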